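/- With the rank-one dressing data below, σ₂·Bᵀ·σ₂ = ((k²−conj(k)²)/(2k))·E(k), where Bᵀ is the transpose of B. -/

import Mathlib

/-
For a 2 × 2 matrix M, σ₂ Mᵀ σ₂ is the adjugate of M. Writing B = c·P with c = (k² − k̄²)/2 and
P = diag(α, ᾱ) y y†, the adjugate of B is c·adj P, while evaluating E at λ = k and using
α(k|y₁|² + k̄|y₂|²) = 1 gives E(k) = k·adj P. When k² = k̄² both sides vanish.
-/

open Matrix Complex ComplexConjugate

noncomputable section

abbrev M2 := Matrix (Fin 2) (Fin 2) ℂ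
abbrev Vec2 := Matrix (Fin 2) (Fin 1) ℂ

def sigma3 : M2 := !![1, 0; 0, -1]
def sigma2 : M2 := !![0, -Complex.I; Complex.I, 0]

/-- α = (k|y₁|² + k̄|y₂|²)⁻¹ -/
def alph (k : ℂ) (y : Vec2) : ℂ :=
  (k * (Complex.normSq (y 0 0) : ℂ) + conj k * (Complex.normSq (y 1 0) : ℂ))⁻¹

/-- z = ((k²−k̄²)/2)·diag(α,ᾱ)·y -/
def zvec (k : ℂ) (y : Vec2) : Vec2 :=
  ((k ^ 2 - (conj k) ^ 2) / 2) • (!![alph k y, 0; 0, conj (alph k y)] * y)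

/-- B = |z⟩⟨y| -/
def Bmat (k : ℂ) (y : Vec2) : M2 := zvec k y * yᴴ

/-- D(λ) = I + B/(λ−k) − σ₃Bσ₃/(λ+k) -/
def Dfun (k : ℂ) (y : Vec2) (lam : ℂ) : M2 :=
  1 + (lam - k)⁻¹ • Bmat k y - (lam + k)⁻¹ • (sigma3 * Bmat k y * sigma3)

/-- E(λ) = I + B†/(λ−k̄) − σ₃B†σ₃/(λ+k̄) -/
def Efun (k : ℂ) (y : Vec2) (lam : ℂ) : M2 :=
  1 + (lam - conj k)⁻¹ • (Bmat k y)ᴴ - (lam + conj k)⁻¹ • (sigma3 * (Bmat k y)ᴴ * sigma3)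

lemma sigma2_mul_transpose_mul_sigma2 (M : M2) : sigma2 * Mᵀ * sigma2 = adjugate M := by
  rw [adjugate_fin_two]
  ext i j
  fin_cases i <;> fin_cases j <;>
    simp [sigma2, Matrix.mul_apply, vecMul, dotProduct, Fin.sum_univ_two] <;> ring_nf <;> simp

lemma sigma3_mul_mul_sigma3 (M : M2) :
    sigma3 * M * sigma3 = !![M 0 0, -M 0 1; -M 1 0, M 1 1] := by
  ext i j
  fin_cases i <;> fin_cases j <;> simp [sigma3, Matrix.mul_apply, vecMul, dotProduct, Fin.sum_univ_two]

lemma Bmat_eq_smul (k : ℂ) (y : Vec2) :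
    Bmat k y = ((k ^ 2 - conj k ^ 2) / 2) • (diagonal ![alph k y, conj (alph k y)] * y * yᴴ) := by
  rw [Bmat, zvec, Matrix.smul_mul, diagonal_fin_two]
  rfl

lemma Efun_self {k : ℂ} {y : Vec2} (hc : k ^ 2 - conj k ^ 2 ≠ 0)
    (hy : k * (Complex.normSq (y 0 0) : ℂ) + conj k * (Complex.normSq (y 1 0) : ℂ) ≠ 0) :
    Efun k y k = k • adjugate (diagonal ![alph k y, conj (alph k y)] * y * yᴴ) := by
  have h1 : k - conj k ≠ 0 := fun h => hc (by linear_combination (k + conj k) * h)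
  have h2 : k + conj k ≠ 0 := fun h => hc (by linear_combination (k - conj k) * h)
  have hα : alph k y * (k * (y 0 0 * conj (y 0 0)) + conj k * (y 1 0 * conj (y 1 0))) = 1 := by
    rw [alph, Complex.mul_conj, Complex.mul_conj]
    exact inv_mul_cancel₀ hy
  have hα' := congrArg conj hα
  simp only [map_mul, map_add, Complex.conj_conj, map_one] at hα'
  /- At λ = k the two poles combine to 2k̄/(k² − k̄²) on the diagonal of B† and to 2k/(k² − k̄²)
  off it; the normalization of α then turns 1 − k̄ᾱ|y₁|² into kᾱ|y₂|². -/
  rw [Efun, sigma3_mul_mul_sigma3, Bmat_eq_smul, adjugate_fin_two]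
  ext i j
  fin_cases i <;> fin_cases j <;>
    simp [Matrix.mul_apply, Fin.sum_univ_two] <;>
    field_simp
  · linear_combination (2 * (conj k ^ 2 - k ^ 2)) * hα'
  · ring
  · ring
  · linear_combination (2 * (conj k ^ 2 - k ^ 2)) * hα

theorem sigma2_B_transpose_general (k : ℂ) (y : Vec2)
    (hy : k * (Complex.normSq (y 0 0) : ℂ) + conj k * (Complex.normSq (y 1 0) : ℂ) ≠ 0) :
    sigma2 * (Bmat k y)ᵀ * sigma2 = ((k ^ 2 - (conj k) ^ 2) / (2 * k)) • Efun k y k := by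
  rw [sigma2_mul_transpose_mul_sigma2, Bmat_eq_smul, adjugate_smul, Fintype.card_fin, pow_one]
  by_cases hc : k ^ 2 - conj k ^ 2 = 0
  · simp [hc]
  · have hk : k ≠ 0 := by rintro rfl; simp at hc
    rw [Efun_self hc hy, smul_smul]
    congr 1
    field_simp

/-- σ₂·Bᵀ·σ₂ = ((k²−k̄²)/(2k))·E(k). -/
theorem sigma2_B_transpose (k : ℂ) (hre : k.re ≠ 0) (him : k.im ≠ 0) (y : Vec2)
    (hy : k * (Complex.normSq (y 0 0) : ℂ) + conj k * (Complex.normSq (y 1 0) : ℂ) ≠ 0) :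
    sigma2 * (Bmat k y)ᵀ * sigma2 = ((k ^ 2 - (conj k) ^ 2) / (2 * k)) • Efun k y k :=
  sigma2_B_transpose_general k y hy
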